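/- Productivity I (Lévy-Longo trees without ⊥): if t and all the types in Γ are •^∞-free and Γ ⊢ e : t is derivable in λ•→, then the Lévy-Longo tree LT(e) of e contains no occurrence of ⊥. -/

import Mathlib

namespace LambdaBullet

/-- Head constructors for pseudo-types. -/
inductive TyHead : Type
  | var (n : ℕ)
  | nat
  | prod
  | arrow
  | bullet

/-- Arity of each pseudo-type constructor. -/
def tyArity : TyHead → Type
  | .var _ => Empty
  | .nat => Empty
  | .prod => Bool
  | .arrow => Bool
  | .bullet => Unit

/-- The polynomial functor whose M-type is the type of pseudo-types. -/
def TyP : PFunctor := ⟨TyHead, tyArity⟩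

/-- Pseudo-types: possibly infinite coinductively generated trees. -/
abbrev PseudoType := TyP.M

/-- Type variable. -/
def tvar (n : ℕ) : PseudoType := PFunctor.M.mk ⟨TyHead.var n, Empty.elim⟩
/-- The type `Nat`. -/
def tnat : PseudoType := PFunctor.M.mk ⟨TyHead.nat, Empty.elim⟩
/-- Product type. -/
def tprod (t s : PseudoType) : PseudoType :=
  PFunctor.M.mk ⟨TyHead.prod, fun b => bif b then s else t⟩
/-- Arrow type. -/
def tarrow (t s : PseudoType) : PseudoType :=
  PFunctor.M.mk ⟨TyHead.arrow, fun b => bif b then s else t⟩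
/-- Delay type `•t`. -/
def tbullet (t : PseudoType) : PseudoType :=
  PFunctor.M.mk ⟨TyHead.bullet, fun _ => t⟩
/-- Iterated delay `•ⁿ t`. -/
def tbulletN (n : ℕ) (t : PseudoType) : PseudoType := tbullet^[n] t

/-- `Child t s` holds iff `s` is an immediate subtree of `t`. -/
def Child (t s : PseudoType) : Prop := ∃ b : TyP.B t.dest.1, t.dest.2 b = s

/-- `Subtree t s` holds iff `s` is a subtree of `t`. -/
def Subtree (t s : PseudoType) : Prop := Relation.ReflTransGen Child t s

/-- A pseudo-type is regular if it has finitely many distinct subtrees. -/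
def Regular (t : PseudoType) : Prop := {s | Subtree t s}.Finite

/-- The root of the tree is a `•`. -/
def headIsBullet (t : PseudoType) : Prop := t.dest.1 = TyHead.bullet

/-- A pseudo-type is guarded if every infinite path in its tree has
infinitely many `•`'s. -/
def Guarded (t : PseudoType) : Prop :=
  ∀ f : ℕ → PseudoType, f 0 = t → (∀ n, Child (f n) (f (n + 1))) →
    ∀ N, ∃ n, N ≤ n ∧ headIsBullet (f n)

/-- A type is a regular and guarded pseudo-type. -/
def IsType (t : PseudoType) : Prop := Regular t ∧ Guarded t

/-- `•^∞`: the unique pseudo-type satisfying `•^∞ = • •^∞`. -/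
def binf : PseudoType := PFunctor.M.corec (fun _ : Unit => ⟨TyHead.bullet, fun _ => ()⟩) ()

/-- Constants. -/
inductive Const : Type
  | pair
  | cfst
  | csnd
  | zero
  | succ

/-- Expressions (with de Bruijn indices for variables). -/
inductive Expr : Type
  | var (x : ℕ)
  | const (k : Const)
  | lam (e : Expr)
  | app (e₁ e₂ : Expr)

def liftRen (f : ℕ → ℕ) : ℕ → ℕ
  | 0 => 0
  | n + 1 => f n + 1

def rename (f : ℕ → ℕ) : Expr → Expr
  | .var n => .var (f n)
  | .const k => .const k
  | .lam e => .lam (rename (liftRen f) e)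
  | .app a b => .app (rename f a) (rename f b)

def liftSub (ρ : ℕ → Expr) : ℕ → Expr
  | 0 => .var 0
  | n + 1 => rename Nat.succ (ρ n)

/-- Simultaneous (capture-avoiding) substitution. -/
def substE (ρ : ℕ → Expr) : Expr → Expr
  | .var n => ρ n
  | .const k => .const k
  | .lam e => .lam (substE (liftSub ρ) e)
  | .app a b => .app (substE ρ a) (substE ρ b)

/-- `subst0 e f` is `e[f/x]` for the topmost variable `x`. -/
def subst0 (e f : Expr) : Expr :=
  substE (fun n => match n with | 0 => f | n + 1 => .var n) e

/-- The pair `⟨e₁, e₂⟩`. -/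
def mkPair (e₁ e₂ : Expr) : Expr := .app (.app (.const .pair) e₁) e₂

/-- Evaluation contexts E ::= [] | E e | fst E | snd E | succ E. -/
inductive ECtx : Type
  | hole
  | app (E : ECtx) (e : Expr)
  | fst (E : ECtx)
  | snd (E : ECtx)
  | succ (E : ECtx)

/-- Plugging an expression into an evaluation context. -/
def ECtx.plug : ECtx → Expr → Expr
  | .hole, e => e
  | .app E f, e => .app (E.plug e) f
  | .fst E, e => .app (.const .cfst) (E.plug e)
  | .snd E, e => .app (.const .csnd) (E.plug e)
  | .succ E, e => .app (.const .succ) (E.plug e)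

/-- Head reduction rules. -/
inductive HeadRed : Expr → Expr → Prop
  | beta (e f) : HeadRed (.app (.lam e) f) (subst0 e f)
  | fst (e₁ e₂) : HeadRed (.app (.const .cfst) (mkPair e₁ e₂)) e₁
  | snd (e₁ e₂) : HeadRed (.app (.const .csnd) (mkPair e₁ e₂)) e₂

/-- Weak head (call-by-name) reduction: head rules closed under evaluation contexts. -/
def Red (a b : Expr) : Prop :=
  ∃ (E : ECtx) (e f : Expr), HeadRed e f ∧ a = E.plug e ∧ b = E.plug f

/-- Many-step reduction. -/
def RedStar : Expr → Expr → Prop := Relation.ReflTransGen Red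

/-- (Weak head) normal forms. -/
def NormalForm (e : Expr) : Prop := ∀ f, ¬ Red e f

/-- Typing contexts: finite maps from (de Bruijn) variables to types. -/
def Ctx : Type := ℕ → Option PseudoType

/-- Extending a typing context with a type for the topmost variable. -/
def Ctx.cons (t : PseudoType) (Γ : Ctx) : Ctx :=
  fun n => match n with | 0 => some t | n + 1 => Γ n

/-- The type assignment κ for constants. -/
inductive KappaTy : Const → PseudoType → Prop
  | pair {t s} : IsType t → IsType s →
      KappaTy .pair (tarrow t (tarrow s (tprod t s)))
  | fst {t s} : IsType t → IsType s →
      KappaTy .cfst (tarrow (tprod t s) t)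
  | snd {t s} : IsType t → IsType s →
      KappaTy .csnd (tarrow (tprod t s) s)
  | zero : KappaTy .zero tnat
  | succ : KappaTy .succ (tarrow tnat tnat)

/-- The type assignment system λ•→. -/
inductive Types : Ctx → Expr → PseudoType → Prop
  | ax {Γ x t} : Γ x = some t → IsType t → Types Γ (.var x) t
  | const {Γ k t} : KappaTy k t → Types Γ (.const k) t
  | bulletI {Γ e t} : Types Γ e t → Types Γ e (tbullet t)
  | arrowI {Γ e n t s} :
      Types (Ctx.cons (tbulletN n t) Γ) e (tbulletN n s) →
      Types Γ (.lam e) (tbulletN n (tarrow t s))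
  | arrowE {Γ e₁ e₂ n t s} :
      Types Γ e₁ (tbulletN n (tarrow t s)) → Types Γ e₂ (tbulletN n t) →
      Types Γ (.app e₁ e₂) (tbulletN n s)


/-- The spine application `h e₁ … eₙ`. -/
def spineApp (h : Expr) (args : List Expr) : Expr := args.foldl Expr.app h

/-- `e` has a weak head normal form. -/
def HasWhnf (e : Expr) : Prop := ∃ f, RedStar e f ∧ NormalForm f

/-- A pseudo-type is `•^∞`-free if none of its subtrees is `•^∞`. -/
def BinfFree (t : PseudoType) : Prop := ∀ s, Subtree t s → s ≠ binf

/-- One step of the Lévy-Longo tree unfolding: `LLSub e a` holds iff `a` is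
an immediate subterm of the Lévy-Longo tree decomposition of `e`
(the body of the abstraction, or one of the arguments of the variable-
or constant-headed spine that `e` reduces to). -/
inductive LLSub : Expr → Expr → Prop
  | lam {e f} : RedStar e (.lam f) → LLSub e f
  | var {e x args a} : RedStar e (spineApp (.var x) args) → a ∈ args → LLSub e a
  | const {e k args a} : RedStar e (spineApp (.const k) args) →
      NormalForm (spineApp (.const k) args) → a ∈ args → LLSub e a

/-- The Lévy-Longo tree of `e` has no `⊥`: every expression reachable in the
coinductive unfolding of the Lévy-Longo tree of `e` has a weak head normal
form (`⊥` is placed at a node exactly when the corresponding expression has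
no weak head normal form). -/
def LLTBotFree (e : Expr) : Prop :=
  ∀ f, Relation.ReflTransGen LLSub e f → HasWhnf f

/-!
A term typable at a `•^∞`-free type has a weak head normal form. Such a type is `•ⁿ u` with `u`
not a `•`. A step-indexed realizability semantics `⟦·⟧ₖ` is closed under head expansion and
contains the stuck terms, and every member of `⟦u⟧₁` has a weak head normal form when the root of
`u` is not a `•`; by the fundamental lemma a term of type `•ⁿ u` lies in `⟦•ⁿ u⟧ₙ₊₁ = ⟦u⟧₁`.

Being typable at a `•^∞`-free type in a `•^∞`-free context is moreover inherited by the subterms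
the Lévy-Longo tree unfolds into: by subject reduction and the classification of typed normal
forms (stuck terms, abstractions, and partial applications of constants), the body of an
abstraction and each argument of a variable- or constant-headed normal form again get
`•^∞`-free types, read off from the type of the whole or from the context.
-/

open PFunctor Relation

section PseudoType

@[simp] lemma dest_tbullet (t : PseudoType) : (tbullet t).dest = ⟨.bullet, fun _ => t⟩ :=
  M.dest_mk _
@[simp] lemma dest_tarrow (a b : PseudoType) :
    (tarrow a b).dest = ⟨.arrow, fun x => bif x then b else a⟩ := M.dest_mk _
@[simp] lemma dest_tprod (a b : PseudoType) :
    (tprod a b).dest = ⟨.prod, fun x => bif x then b else a⟩ := M.dest_mk _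
@[simp] lemma dest_tnat : tnat.dest = ⟨.nat, Empty.elim⟩ := M.dest_mk _
@[simp] lemma dest_binf : binf.dest = ⟨.bullet, fun _ => binf⟩ := M.dest_corec _ _

lemma tbullet_injective : Function.Injective tbullet := fun _ _ h =>
  congrFun (eq_of_heq (Sigma.mk.inj_iff.mp (M.mk_inj h)).2) ()

lemma tarrow_inj {a b c d : PseudoType} (h : tarrow a b = tarrow c d) : a = c ∧ b = d := by
  have h' := eq_of_heq (Sigma.mk.inj_iff.mp (M.mk_inj h)).2
  exact ⟨congrFun h' false, congrFun h' true⟩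

lemma tprod_inj {a b c d : PseudoType} (h : tprod a b = tprod c d) : a = c ∧ b = d := by
  have h' := eq_of_heq (Sigma.mk.inj_iff.mp (M.mk_inj h)).2
  exact ⟨congrFun h' false, congrFun h' true⟩

lemma tbullet_binf : tbullet binf = binf := by
  conv_rhs => rw [← M.mk_dest binf, dest_binf]
  rfl

lemma PseudoType.cases (t : PseudoType) :
    (∃ u, t = tbullet u) ∨ (∃ a b, t = tarrow a b) ∨ (∃ a b, t = tprod a b) ∨
      t = tnat ∨ (∃ n, t = tvar n) := by
  rw [← M.mk_dest t]
  obtain ⟨a, ch⟩ := t.dest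
  cases a with
  | bullet => exact .inl ⟨ch (), rfl⟩
  | arrow =>
    refine .inr (.inl ⟨ch false, ch true, congrArg M.mk (Sigma.ext rfl (heq_of_eq ?_))⟩)
    funext b; cases b <;> rfl
  | prod =>
    refine .inr (.inr (.inl ⟨ch false, ch true, congrArg M.mk (Sigma.ext rfl (heq_of_eq ?_))⟩))
    funext b; cases b <;> rfl
  | nat =>
    exact .inr (.inr (.inr (.inl (congrArg M.mk (Sigma.ext rfl (heq_of_eq (funext nofun)))))))
  | var n =>
    exact .inr (.inr (.inr (.inr ⟨n, congrArg M.mk (Sigma.ext rfl (heq_of_eq (funext nofun)))⟩)))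

lemma child_tbullet {t s : PseudoType} : Child (tbullet t) s ↔ s = t := by
  rw [Child, dest_tbullet]
  exact ⟨fun ⟨_, h⟩ => h.symm, fun h => ⟨(), h.symm⟩⟩

lemma child_tarrow {a b s : PseudoType} : Child (tarrow a b) s ↔ s = a ∨ s = b := by
  rw [Child, dest_tarrow]
  constructor
  · rintro ⟨_ | _, rfl⟩
    exacts [.inl rfl, .inr rfl]
  · rintro (rfl | rfl)
    exacts [⟨false, rfl⟩, ⟨true, rfl⟩]

lemma child_tprod {a b s : PseudoType} : Child (tprod a b) s ↔ s = a ∨ s = b := by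
  rw [Child, dest_tprod]
  constructor
  · rintro ⟨_ | _, rfl⟩
    exacts [.inl rfl, .inr rfl]
  · rintro (rfl | rfl)
    exacts [⟨false, rfl⟩, ⟨true, rfl⟩]

lemma not_child_tnat {s : PseudoType} : ¬ Child tnat s := by
  rw [Child, dest_tnat]; exact fun ⟨x, _⟩ => x.elim

lemma headIsBullet_tbullet (t : PseudoType) : headIsBullet (tbullet t) := rfl
lemma not_headIsBullet_tarrow (a b : PseudoType) : ¬ headIsBullet (tarrow a b) := nofun
lemma not_headIsBullet_tprod (a b : PseudoType) : ¬ headIsBullet (tprod a b) := nofun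
lemma not_headIsBullet_tnat : ¬ headIsBullet tnat := nofun
lemma not_headIsBullet_tvar (n : ℕ) : ¬ headIsBullet (tvar n) := nofun

lemma headIsBullet_binf : headIsBullet binf := by
  rw [headIsBullet, dest_binf]

lemma tbullet_eq_binf_iff {t : PseudoType} : tbullet t = binf ↔ t = binf := by
  conv_lhs => rw [← tbullet_binf]
  exact tbullet_injective.eq_iff

lemma tbulletN_succ (n : ℕ) (t : PseudoType) :
    tbulletN (n + 1) t = tbullet (tbulletN n t) := Function.iterate_succ_apply' _ _ _

lemma tbulletN_inj {u v : PseudoType} (hu : ¬ headIsBullet u) (hv : ¬ headIsBullet v) :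
    ∀ {n m : ℕ}, tbulletN n u = tbulletN m v → n = m ∧ u = v
  | 0, 0, h => ⟨rfl, h⟩
  | 0, m + 1, h => absurd (headIsBullet_tbullet (tbulletN m v)) (tbulletN_succ m v ▸ h ▸ hu)
  | n + 1, 0, h => absurd (headIsBullet_tbullet (tbulletN n u)) (tbulletN_succ n u ▸ h.symm ▸ hv)
  | n + 1, m + 1, h => by
    rw [tbulletN_succ, tbulletN_succ] at h
    obtain ⟨rfl, rfl⟩ := tbulletN_inj hu hv (tbullet_injective h)
    exact ⟨rfl, rfl⟩

end PseudoType

section BinfFree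

lemma BinfFree.ne_binf {t : PseudoType} (h : BinfFree t) : t ≠ binf := h t .refl

lemma BinfFree.child {t s : PseudoType} (h : BinfFree t) (hs : Child t s) : BinfFree s :=
  fun u hu => h u (.head hs hu)

lemma binfFree_iff_children {t : PseudoType} :
    BinfFree t ↔ t ≠ binf ∧ ∀ s, Child t s → BinfFree s := by
  refine ⟨fun h => ⟨h.ne_binf, fun _ => h.child⟩, fun ⟨hne, hch⟩ s hs => ?_⟩
  rcases ReflTransGen.cases_head hs with rfl | ⟨c, hc, hcs⟩
  exacts [hne, hch c hc s hcs]

@[simp] lemma binfFree_tbullet_iff {t : PseudoType} : BinfFree (tbullet t) ↔ BinfFree t := by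
  rw [binfFree_iff_children (t := tbullet t)]
  simp only [child_tbullet, forall_eq, ne_eq, tbullet_eq_binf_iff]
  exact ⟨And.right, fun h => ⟨h.ne_binf, h⟩⟩

@[simp] lemma binfFree_tbulletN_iff {n : ℕ} {t : PseudoType} :
    BinfFree (tbulletN n t) ↔ BinfFree t := by
  induction n with
  | zero => rfl
  | succ n ih => rw [tbulletN_succ, binfFree_tbullet_iff, ih]

lemma ne_binf_of_not_headIsBullet {t : PseudoType} (h : ¬ headIsBullet t) : t ≠ binf :=
  fun he => h (he ▸ headIsBullet_binf)

@[simp] lemma binfFree_tarrow_iff {a b : PseudoType} :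
    BinfFree (tarrow a b) ↔ BinfFree a ∧ BinfFree b := by
  rw [binfFree_iff_children]
  simp [child_tarrow, ne_binf_of_not_headIsBullet (not_headIsBullet_tarrow a b)]

@[simp] lemma binfFree_tprod_iff {a b : PseudoType} :
    BinfFree (tprod a b) ↔ BinfFree a ∧ BinfFree b := by
  rw [binfFree_iff_children]
  simp [child_tprod, ne_binf_of_not_headIsBullet (not_headIsBullet_tprod a b)]

lemma binfFree_tnat : BinfFree tnat :=
  binfFree_iff_children.mpr ⟨ne_binf_of_not_headIsBullet not_headIsBullet_tnat,
    fun _ h => absurd h not_child_tnat⟩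

lemma BinfFree.exists_tbulletN {t : PseudoType} (h : BinfFree t) :
    ∃ n u, t = tbulletN n u ∧ ¬ headIsBullet u := by
  -- Otherwise `t` is bisimilar to `•^∞`: stripping any number of `•`s leaves a `•` at the root.
  by_contra! hc
  refine h.ne_binf (M.bisim (fun x y => y = binf ∧ ∀ n u, x = tbulletN n u → headIsBullet u)
    ?_ t binf ⟨rfl, hc⟩)
  rintro x _ ⟨rfl, hx⟩
  rcases PseudoType.cases x with ⟨u, rfl⟩ | ⟨a, b, rfl⟩ | ⟨a, b, rfl⟩ | rfl | ⟨m, rfl⟩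
  · refine ⟨.bullet, fun _ => u, fun _ => binf, dest_tbullet u, dest_binf, fun _ => ⟨rfl, ?_⟩⟩
    intro n w hw
    exact hx (n + 1) w (by rw [tbulletN_succ, ← hw])
  · exact absurd (hx 0 _ rfl) (not_headIsBullet_tarrow a b)
  · exact absurd (hx 0 _ rfl) (not_headIsBullet_tprod a b)
  · exact absurd (hx 0 _ rfl) not_headIsBullet_tnat
  · exact absurd (hx 0 _ rfl) (not_headIsBullet_tvar m)

end BinfFree

section Guarded

lemma Guarded.child {t s : PseudoType} (h : Guarded t) (hc : Child t s) : Guarded s := by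
  intro f hf0 hstep N
  let g : ℕ → PseudoType := fun n => Nat.casesOn n t f
  have hg : ∀ n, Child (g n) (g (n + 1)) := by
    rintro (_ | n)
    exacts [show Child t (f 0) from hf0 ▸ hc, hstep n]
  obtain ⟨_ | n, hn, hb⟩ := h g rfl hg (N + 1)
  exacts [absurd hn (by omega), ⟨n, by omega, hb⟩]

lemma guarded_iff_children {t : PseudoType} : Guarded t ↔ ∀ s, Child t s → Guarded s := by
  refine ⟨fun h _ => h.child, fun h f hf0 hstep N => ?_⟩
  obtain ⟨n, hn, hb⟩ := h (f 1) (hf0 ▸ hstep 0) (fun n => f (n + 1)) rfl (fun n => hstep (n + 1)) N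
  exact ⟨n + 1, by omega, hb⟩

lemma guarded_tbullet_iff {t : PseudoType} : Guarded (tbullet t) ↔ Guarded t := by
  simp [guarded_iff_children (t := tbullet t), child_tbullet]

lemma guarded_tbulletN_iff {n : ℕ} {t : PseudoType} : Guarded (tbulletN n t) ↔ Guarded t := by
  induction n with
  | zero => rfl
  | succ n ih => rw [tbulletN_succ, guarded_tbullet_iff, ih]

lemma guarded_tarrow_iff {a b : PseudoType} : Guarded (tarrow a b) ↔ Guarded a ∧ Guarded b := by
  simp [guarded_iff_children (t := tarrow a b), child_tarrow, or_imp, forall_and]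

lemma guarded_tprod_iff {a b : PseudoType} : Guarded (tprod a b) ↔ Guarded a ∧ Guarded b := by
  simp [guarded_iff_children (t := tprod a b), child_tprod, or_imp, forall_and]

lemma guarded_tnat : Guarded tnat :=
  guarded_iff_children.mpr fun _ h => absurd h not_child_tnat

lemma isType_tbullet_iff {t : PseudoType} : IsType (tbullet t) ↔ IsType t := by
  have hsub : {s | Subtree (tbullet t) s} = insert (tbullet t) {s | Subtree t s} := by
    ext s
    simp only [Set.mem_ofPred_eq, Set.mem_insert_iff, Subtree]
    rw [ReflTransGen.cases_head_iff]
    simp [child_tbullet, eq_comm]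
  rw [IsType, IsType, Regular, Regular, hsub, Set.finite_insert, guarded_tbullet_iff]

end Guarded

section Substitution

lemma liftRen_comp (f g : ℕ → ℕ) : liftRen (f ∘ g) = liftRen f ∘ liftRen g :=
  funext fun n => by cases n <;> rfl

lemma rename_rename (f g : ℕ → ℕ) (e : Expr) :
    rename f (rename g e) = rename (f ∘ g) e := by
  induction e generalizing f g with
  | var x => rfl
  | const k => rfl
  | lam e ih => simp [rename, liftRen_comp, ih]
  | app a b iha ihb => simp [rename, iha, ihb]

lemma liftSub_comp_liftRen (σ : ℕ → Expr) (f : ℕ → ℕ) :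
    liftSub σ ∘ liftRen f = liftSub (σ ∘ f) :=
  funext fun n => by cases n <;> rfl

lemma substE_rename (σ : ℕ → Expr) (f : ℕ → ℕ) (e : Expr) :
    substE σ (rename f e) = substE (σ ∘ f) e := by
  induction e generalizing σ f with
  | var x => rfl
  | const k => rfl
  | lam e ih => simp [rename, substE, ih, liftSub_comp_liftRen]
  | app a b iha ihb => simp [rename, substE, iha, ihb]

lemma rename_liftRen_liftSub (f : ℕ → ℕ) (σ : ℕ → Expr) :
    rename (liftRen f) ∘ liftSub σ = liftSub (rename f ∘ σ) := by
  funext n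
  cases n with
  | zero => rfl
  | succ n =>
    change rename (liftRen f) (rename Nat.succ (σ n)) = rename Nat.succ (rename f (σ n))
    rw [rename_rename, rename_rename]
    rfl

lemma rename_substE (f : ℕ → ℕ) (σ : ℕ → Expr) (e : Expr) :
    rename f (substE σ e) = substE (rename f ∘ σ) e := by
  induction e generalizing σ f with
  | var x => rfl
  | const k => rfl
  | lam e ih => simp [rename, substE, ih, rename_liftRen_liftSub]
  | app a b iha ihb => simp [rename, substE, iha, ihb]

lemma substE_liftSub_liftSub (σ τ : ℕ → Expr) :
    substE (liftSub σ) ∘ liftSub τ = liftSub (substE σ ∘ τ) := by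
  funext n
  cases n with
  | zero => rfl
  | succ n =>
    change substE (liftSub σ) (rename Nat.succ (τ n)) = rename Nat.succ (substE σ (τ n))
    rw [substE_rename, rename_substE]
    rfl

lemma substE_substE (σ τ : ℕ → Expr) (e : Expr) :
    substE σ (substE τ e) = substE (substE σ ∘ τ) e := by
  induction e generalizing σ τ with
  | var x => rfl
  | const k => rfl
  | lam e ih => simp [substE, ih, substE_liftSub_liftSub]
  | app a b iha ihb => simp [substE, iha, ihb]

lemma substE_var (e : Expr) : substE Expr.var e = e := by
  have hlift : liftSub Expr.var = Expr.var := funext fun n => by cases n <;> rfl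
  induction e with
  | var x => rfl
  | const k => rfl
  | lam e ih => simp [substE, hlift, ih]
  | app a b iha ihb => simp [substE, iha, ihb]

def scons (f : Expr) (σ : ℕ → Expr) : ℕ → Expr
  | 0 => f
  | n + 1 => σ n

lemma subst0_eq_substE (e f : Expr) : subst0 e f = substE (scons f Expr.var) e := by
  rw [subst0]
  congr 1

lemma subst0_substE_liftSub (σ : ℕ → Expr) (e f : Expr) :
    subst0 (substE (liftSub σ) e) f = substE (scons f σ) e := by
  rw [subst0_eq_substE, substE_substE]
  congr 1
  funext n
  cases n with
  | zero => rfl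
  | succ n =>
    change substE _ (rename Nat.succ (σ n)) = σ n
    rw [substE_rename]
    exact substE_var (σ n)

end Substitution

section Reduction

def ECtx.comp : ECtx → ECtx → ECtx
  | .hole, F => F
  | .app E e, F => .app (E.comp F) e
  | .fst E, F => .fst (E.comp F)
  | .snd E, F => .snd (E.comp F)
  | .succ E, F => .succ (E.comp F)

lemma ECtx.plug_comp (E F : ECtx) (e : Expr) : (E.comp F).plug e = E.plug (F.plug e) := by
  induction E <;> simp_all [ECtx.comp, ECtx.plug]

lemma Red.of_headRed {e f : Expr} (h : HeadRed e f) : Red e f := ⟨.hole, e, f, h, rfl, rfl⟩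

lemma Red.plug {a b : Expr} (E : ECtx) (h : Red a b) : Red (E.plug a) (E.plug b) := by
  obtain ⟨F, u, v, hr, rfl, rfl⟩ := h
  exact ⟨E.comp F, u, v, hr, (E.plug_comp F u).symm, (E.plug_comp F v).symm⟩

lemma RedStar.plug {a b : Expr} (E : ECtx) (h : RedStar a b) :
    RedStar (E.plug a) (E.plug b) :=
  ReflTransGen.lift E.plug (fun _ _ => Red.plug E) _ _ h

lemma Red.app_left {u u' : Expr} (v : Expr) (h : Red u u') : Red (.app u v) (.app u' v) :=
  h.plug (.app .hole v)

lemma Red.app_inv {u v w : Expr} (h : Red (.app u v) w) :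
    (∃ u', Red u u') ∨ (∃ b, u = .lam b) ∨
    ((u = .const .cfst ∨ u = .const .csnd) ∧ ∃ a b, v = mkPair a b) ∨
    ((u = .const .cfst ∨ u = .const .csnd ∨ u = .const .succ) ∧ ∃ v', Red v v') := by
  obtain ⟨E, a, b, hr, he, rfl⟩ := h
  cases E with
  | hole =>
    cases hr with
    | beta => exact .inr (.inl ⟨_, (Expr.app.inj he).1⟩)
    | fst => exact .inr (.inr (.inl ⟨.inl (Expr.app.inj he).1, _, _, (Expr.app.inj he).2⟩))
    | snd => exact .inr (.inr (.inl ⟨.inr (Expr.app.inj he).1, _, _, (Expr.app.inj he).2⟩))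
  | app E f => exact .inl ⟨_, E, a, b, hr, (Expr.app.inj he).1, rfl⟩
  | fst E =>
    exact .inr (.inr (.inr ⟨.inl (Expr.app.inj he).1, _, E, a, b, hr, (Expr.app.inj he).2, rfl⟩))
  | snd E =>
    exact .inr (.inr (.inr ⟨.inr (.inl (Expr.app.inj he).1), _, E, a, b, hr,
      (Expr.app.inj he).2, rfl⟩))
  | succ E =>
    exact .inr (.inr (.inr ⟨.inr (.inr (Expr.app.inj he).1), _, E, a, b, hr,
      (Expr.app.inj he).2, rfl⟩))

lemma NormalForm.of_not_app {e : Expr} (hne : ∀ a b, e ≠ .app a b) : NormalForm e := by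
  rintro _ ⟨E, a, b, hr, he, -⟩
  cases E <;> first | exact hne _ _ he | cases hr <;> exact hne _ _ he

lemma normalForm_var (x : ℕ) : NormalForm (.var x) := .of_not_app nofun
lemma normalForm_const (k : Const) : NormalForm (.const k) := .of_not_app nofun
lemma normalForm_lam (e : Expr) : NormalForm (.lam e) := .of_not_app nofun

lemma NormalForm.app_left {u v : Expr} (hn : NormalForm (.app u v)) : NormalForm u :=
  fun _ hw => hn _ (hw.app_left v)

lemma NormalForm.app_right {k : Const} {v : Expr} (hn : NormalForm (.app (.const k) v))
    (hk : k = .cfst ∨ k = .csnd ∨ k = .succ) : NormalForm v := by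
  rintro _ ⟨E, a, b, hr, rfl, rfl⟩
  rcases hk with rfl | rfl | rfl
  exacts [hn _ (Red.plug (.fst E) ⟨.hole, a, b, hr, rfl, rfl⟩),
    hn _ (Red.plug (.snd E) ⟨.hole, a, b, hr, rfl, rfl⟩),
    hn _ (Red.plug (.succ E) ⟨.hole, a, b, hr, rfl, rfl⟩)]

lemma normalForm_succ_app {v : Expr} (h : NormalForm v) : NormalForm (.app (.const .succ) v) := by
  intro w hw
  rcases hw.app_inv with ⟨_, hu⟩ | ⟨_, hb⟩ | ⟨hc | hc, -⟩ | ⟨-, _, hv⟩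
  · exact normalForm_const _ _ hu
  all_goals
    first
    | exact Expr.noConfusion hb
    | exact Const.noConfusion (Expr.const.inj hc)
    | exact h _ hv

lemma normalForm_pair_app (a : Expr) : NormalForm (.app (.const .pair) a) := by
  intro w hw
  rcases hw.app_inv with ⟨_, hu⟩ | ⟨_, hb⟩ | ⟨hc | hc, -⟩ | ⟨hc | hc | hc, -⟩
  · exact normalForm_const _ _ hu
  all_goals first | exact Expr.noConfusion hb | exact Const.noConfusion (Expr.const.inj hc)

lemma normalForm_mkPair (a b : Expr) : NormalForm (mkPair a b) := by
  intro w hw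
  rcases hw.app_inv with ⟨_, hu⟩ | ⟨_, hb⟩ | ⟨hc | hc, -⟩ | ⟨hc | hc | hc, -⟩
  · exact normalForm_pair_app a _ hu
  all_goals exact Expr.noConfusion (by first | exact hb | exact hc)

lemma HasWhnf.of_normalForm {e : Expr} (h : NormalForm e) : HasWhnf e := ⟨e, .refl, h⟩

lemma HasWhnf.of_red {e e' : Expr} (h : Red e e') (hw : HasWhnf e') : HasWhnf e :=
  let ⟨w, hs, hn⟩ := hw
  ⟨w, .head h hs, hn⟩

lemma HasWhnf.succ_app {v : Expr} (h : HasWhnf v) : HasWhnf (.app (.const .succ) v) :=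
  let ⟨w, hs, hn⟩ := h
  ⟨.app (.const .succ) w, hs.plug (.succ .hole), normalForm_succ_app hn⟩

end Reduction

/-- Terms whose evaluation is blocked by a free variable. -/
inductive Stuck : Expr → Prop
  | var (x : ℕ) : Stuck (.var x)
  | app {e : Expr} (f : Expr) : Stuck e → Stuck (.app e f)
  | fst {e : Expr} : Stuck e → Stuck (.app (.const .cfst) e)
  | snd {e : Expr} : Stuck e → Stuck (.app (.const .csnd) e)

namespace Stuck

lemma not_mkPair {a b : Expr} : ¬ Stuck (mkPair a b) := by
  rintro (_ | ⟨_, _ | ⟨_, ⟨⟩⟩⟩)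

lemma normalForm {e : Expr} (h : Stuck e) : NormalForm e := by
  induction h with
  | var x => exact normalForm_var x
  | app f hs ih =>
    intro w hw
    rcases hw.app_inv with ⟨_, hu⟩ | ⟨_, rfl⟩ | ⟨rfl | rfl, -⟩ | ⟨rfl | rfl | rfl, -⟩
    · exact ih _ hu
    all_goals cases hs
  | fst hs ih | snd hs ih =>
    intro w hw
    rcases hw.app_inv with ⟨_, hu⟩ | ⟨_, hb⟩ | ⟨-, _, _, rfl⟩ | ⟨-, _, hv⟩
    · exact normalForm_const _ _ hu
    · exact Expr.noConfusion hb
    · exact not_mkPair hs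
    · exact ih _ hv

lemma spine {h : Expr} (hs : Stuck h) (l : List Expr) : Stuck (spineApp h l) := by
  induction l generalizing h with
  | nil => exact hs
  | cons a l ih => exact ih (hs.app a)

end Stuck

section TypeEquations

lemma tbulletN_tarrow_inj {n m : ℕ} {a b c d : PseudoType}
    (h : tbulletN n (tarrow a b) = tbulletN m (tarrow c d)) : n = m ∧ a = c ∧ b = d := by
  obtain ⟨rfl, h'⟩ := tbulletN_inj (not_headIsBullet_tarrow a b) (not_headIsBullet_tarrow c d) h
  exact ⟨rfl, tarrow_inj h'⟩

lemma tbulletN_tprod_inj {n m : ℕ} {a b c d : PseudoType}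
    (h : tbulletN n (tprod a b) = tbulletN m (tprod c d)) : n = m ∧ a = c ∧ b = d := by
  obtain ⟨rfl, h'⟩ := tbulletN_inj (not_headIsBullet_tprod a b) (not_headIsBullet_tprod c d) h
  exact ⟨rfl, tprod_inj h'⟩

lemma tbulletN_tarrow_ne_tprod {n m : ℕ} {a b c d : PseudoType} :
    tbulletN n (tarrow a b) ≠ tbulletN m (tprod c d) := fun h =>
  nomatch congrArg (·.dest.1)
    (tbulletN_inj (not_headIsBullet_tarrow a b) (not_headIsBullet_tprod c d) h).2

lemma tbulletN_tarrow_ne_tnat {n m : ℕ} {a b : PseudoType} :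
    tbulletN n (tarrow a b) ≠ tbulletN m tnat := fun h =>
  nomatch congrArg (·.dest.1)
    (tbulletN_inj (not_headIsBullet_tarrow a b) not_headIsBullet_tnat h).2

lemma tbulletN_tprod_ne_tnat {n m : ℕ} {a b : PseudoType} :
    tbulletN n (tprod a b) ≠ tbulletN m tnat := fun h =>
  nomatch congrArg (·.dest.1)
    (tbulletN_inj (not_headIsBullet_tprod a b) not_headIsBullet_tnat h).2

end TypeEquations

namespace Types

variable {Γ : Ctx}

lemma var_inv {x : ℕ} {T : PseudoType} (h : Types Γ (.var x) T) :
    ∃ m u, Γ x = some u ∧ IsType u ∧ T = tbulletN m u := by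
  generalize hE : Expr.var x = E at h
  induction h with
  | ax hx ht => cases hE; exact ⟨0, _, hx, ht, rfl⟩
  | bulletI _ ih =>
    obtain ⟨m, u, h1, h2, rfl⟩ := ih hE
    exact ⟨m + 1, u, h1, h2, (tbulletN_succ m u).symm⟩
  | _ => cases hE

lemma const_inv {k : Const} {T : PseudoType} (h : Types Γ (.const k) T) :
    ∃ m u, KappaTy k u ∧ T = tbulletN m u := by
  generalize hE : Expr.const k = E at h
  induction h with
  | const hk => cases hE; exact ⟨0, _, hk, rfl⟩
  | bulletI _ ih =>
    obtain ⟨m, u, h1, rfl⟩ := ih hE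
    exact ⟨m + 1, u, h1, (tbulletN_succ m u).symm⟩
  | _ => cases hE

lemma app_inv {u v : Expr} {T : PseudoType} (h : Types Γ (.app u v) T) :
    ∃ n a b, T = tbulletN n b ∧ Types Γ u (tbulletN n (tarrow a b)) ∧
      Types Γ v (tbulletN n a) := by
  generalize hE : Expr.app u v = E at h
  induction h with
  | bulletI _ ih =>
    obtain ⟨n, a, b, rfl, h1, h2⟩ := ih hE
    refine ⟨n + 1, a, b, (tbulletN_succ n b).symm, ?_, ?_⟩ <;> rw [tbulletN_succ]
    exacts [h1.bulletI, h2.bulletI]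
  | arrowE h1 h2 => cases hE; exact ⟨_, _, _, rfl, h1, h2⟩
  | _ => cases hE

lemma rename {e : Expr} {t : PseudoType} (h : Types Γ e t) {Δ : Ctx} {f : ℕ → ℕ}
    (hf : ∀ x u, Γ x = some u → Δ (f x) = some u) : Types Δ (LambdaBullet.rename f e) t := by
  induction h generalizing Δ f with
  | ax hx ht => exact ax (hf _ _ hx) ht
  | const hk => exact const hk
  | bulletI _ ih => exact (ih hf).bulletI
  | arrowI _ ih =>
    refine arrowI (ih ?_)
    rintro (_ | x) u hx
    exacts [hx, hf x u hx]
  | arrowE _ _ ih1 ih2 => exact arrowE (ih1 hf) (ih2 hf)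

lemma subst {e : Expr} {t : PseudoType} (h : Types Γ e t) {Δ : Ctx} {σ : ℕ → Expr}
    (hσ : ∀ x u, Γ x = some u → IsType u → Types Δ (σ x) u) :
    Types Δ (substE σ e) t := by
  induction h generalizing Δ σ with
  | ax hx ht => exact hσ _ _ hx ht
  | const hk => exact const hk
  | bulletI _ ih => exact (ih hσ).bulletI
  | arrowI _ ih =>
    refine arrowI (ih ?_)
    rintro (_ | x) u hx hu
    · cases hx
      exact ax rfl hu
    · exact (hσ x u hx hu).rename fun y w hw => hw
  | arrowE _ _ ih1 ih2 => exact arrowE (ih1 hσ) (ih2 hσ)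

lemma of_ctx {e : Expr} {t : PseudoType} (h : Types Γ e t) {Δ : Ctx}
    (hΔ : ∀ x u, Γ x = some u → IsType u → Types Δ (.var x) u) : Types Δ e t := by
  simpa [substE_var] using h.subst hΔ

def _root_.LambdaBullet.Ctx.bullet (Γ : Ctx) : Ctx := fun x => (Γ x).map tbullet

lemma _root_.LambdaBullet.Ctx.bullet_cons (t : PseudoType) (Γ : Ctx) :
    (Ctx.cons t Γ).bullet = Ctx.cons (tbullet t) Γ.bullet :=
  funext fun x => by cases x <;> rfl

lemma delay {e : Expr} {t : PseudoType} (h : Types Γ e t) : Types Γ.bullet e (tbullet t) := by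
  induction h with
  | ax hx ht => exact ax (by simp [Ctx.bullet, hx]) (isType_tbullet_iff.mpr ht)
  | const hk => exact (const hk).bulletI
  | bulletI _ ih => exact ih.bulletI
  | arrowI _ ih =>
    rw [Ctx.bullet_cons, ← tbulletN_succ, ← tbulletN_succ] at ih
    simpa only [tbulletN_succ] using arrowI ih
  | arrowE _ _ ih1 ih2 =>
    rw [← tbulletN_succ] at ih1 ih2
    simpa only [tbulletN_succ] using arrowE ih1 ih2

lemma lam_inv {e : Expr} {T : PseudoType} (h : Types Γ (.lam e) T) :
    ∃ n a b, T = tbulletN n (tarrow a b) ∧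
      Types (Ctx.cons (tbulletN n a) Γ) e (tbulletN n b) := by
  generalize hE : Expr.lam e = E at h
  induction h with
  | @bulletI Γ _ _ _ ih =>
    obtain ⟨n, a, b, rfl, hb⟩ := ih hE
    refine ⟨n + 1, a, b, (tbulletN_succ _ _).symm, ?_⟩
    have hd := hb.delay
    rw [Ctx.bullet_cons, ← tbulletN_succ, ← tbulletN_succ] at hd
    refine hd.of_ctx ?_
    rintro (_ | x) u hx hu
    · exact ax hx hu
    · obtain ⟨w, hw, rfl⟩ := Option.map_eq_some_iff.mp hx
      exact (ax (Γ := Ctx.cons _ Γ) (x := x + 1) hw (isType_tbullet_iff.mp hu)).bulletI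
  | arrowI hb => cases hE; exact ⟨_, _, _, rfl, hb⟩
  | _ => cases hE

end Types

namespace Types

variable {Γ : Ctx}

lemma pair_app_inv {a : Expr} {T : PseudoType} (h : Types Γ (.app (.const .pair) a) T) :
    ∃ n p q, T = tbulletN n (tarrow q (tprod p q)) ∧ Types Γ a (tbulletN n p) := by
  obtain ⟨n, c, d, rfl, h1, h2⟩ := h.app_inv
  obtain ⟨m, w, hk, he⟩ := h1.const_inv
  cases hk with
  | pair =>
    obtain ⟨rfl, rfl, rfl⟩ := tbulletN_tarrow_inj he.symm
    exact ⟨_, _, _, rfl, h2⟩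

lemma mkPair_inv {a b : Expr} {T : PseudoType} (h : Types Γ (mkPair a b) T) :
    ∃ n p q, T = tbulletN n (tprod p q) ∧ Types Γ a (tbulletN n p) ∧
      Types Γ b (tbulletN n q) := by
  obtain ⟨n, c, d, rfl, h1, h2⟩ := h.app_inv
  obtain ⟨m, p, q, he, ha⟩ := h1.pair_app_inv
  obtain ⟨rfl, rfl, rfl⟩ := tbulletN_tarrow_inj he
  exact ⟨_, _, _, rfl, ha, h2⟩

lemma fst_app_inv {v : Expr} {T : PseudoType} (h : Types Γ (.app (.const .cfst) v) T) :
    ∃ n a b, T = tbulletN n a ∧ Types Γ v (tbulletN n (tprod a b)) := by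
  obtain ⟨n, c, d, rfl, h1, h2⟩ := h.app_inv
  obtain ⟨m, w, hk, he⟩ := h1.const_inv
  cases hk with
  | fst =>
    obtain ⟨rfl, rfl, rfl⟩ := tbulletN_tarrow_inj he.symm
    exact ⟨_, _, _, rfl, h2⟩

lemma snd_app_inv {v : Expr} {T : PseudoType} (h : Types Γ (.app (.const .csnd) v) T) :
    ∃ n a b, T = tbulletN n b ∧ Types Γ v (tbulletN n (tprod a b)) := by
  obtain ⟨n, c, d, rfl, h1, h2⟩ := h.app_inv
  obtain ⟨m, w, hk, he⟩ := h1.const_inv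
  cases hk with
  | snd =>
    obtain ⟨rfl, rfl, rfl⟩ := tbulletN_tarrow_inj he.symm
    exact ⟨_, _, _, rfl, h2⟩

lemma succ_app_inv {v : Expr} {T : PseudoType} (h : Types Γ (.app (.const .succ) v) T) :
    ∃ n, T = tbulletN n tnat ∧ Types Γ v (tbulletN n tnat) := by
  obtain ⟨n, c, d, rfl, h1, h2⟩ := h.app_inv
  obtain ⟨m, w, hk, he⟩ := h1.const_inv
  cases hk with
  | succ =>
    obtain ⟨rfl, rfl, rfl⟩ := tbulletN_tarrow_inj he.symm
    exact ⟨_, rfl, h2⟩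

lemma not_zero_app {v : Expr} {T : PseudoType} : ¬ Types Γ (.app (.const .zero) v) T := by
  intro h
  obtain ⟨n, c, d, -, h1, -⟩ := h.app_inv
  obtain ⟨m, w, hk, he⟩ := h1.const_inv
  cases hk
  exact tbulletN_tarrow_ne_tnat he

lemma not_mkPair_app {a b c : Expr} {T : PseudoType} : ¬ Types Γ (.app (mkPair a b) c) T := by
  intro h
  obtain ⟨n, c, d, -, h1, -⟩ := h.app_inv
  obtain ⟨m, p, q, he, -⟩ := h1.mkPair_inv
  exact tbulletN_tarrow_ne_tprod he

lemma not_succ_app_app {a b : Expr} {T : PseudoType} :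
    ¬ Types Γ (.app (.app (.const .succ) a) b) T := by
  intro h
  obtain ⟨n, c, d, -, h1, -⟩ := h.app_inv
  obtain ⟨m, he, -⟩ := h1.succ_app_inv
  exact tbulletN_tarrow_ne_tnat he

end Types

section SubjectReduction

variable {Γ : Ctx}

lemma HeadRed.types {e e' : Expr} {T : PseudoType} (hr : HeadRed e e') (h : Types Γ e T) :
    Types Γ e' T := by
  cases hr with
  | beta body f =>
    obtain ⟨n, c, d, rfl, h1, h2⟩ := h.app_inv
    obtain ⟨n', a', b', he, hb⟩ := h1.lam_inv
    obtain ⟨rfl, rfl, rfl⟩ := tbulletN_tarrow_inj he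
    rw [subst0_eq_substE]
    refine hb.subst ?_
    rintro (_ | x) u hx hu
    · cases hx
      exact h2
    · exact .ax hx hu
  | fst =>
    obtain ⟨n, a, b, rfl, hv⟩ := h.fst_app_inv
    obtain ⟨m, p, q, he, hp, -⟩ := hv.mkPair_inv
    obtain ⟨rfl, rfl, rfl⟩ := tbulletN_tprod_inj he
    exact hp
  | snd =>
    obtain ⟨n, a, b, rfl, hv⟩ := h.snd_app_inv
    obtain ⟨m, p, q, he, -, hq⟩ := hv.mkPair_inv
    obtain ⟨rfl, rfl, rfl⟩ := tbulletN_tprod_inj he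
    exact hq

lemma Red.types {e e' : Expr} {T : PseudoType} (hr : Red e e') (h : Types Γ e T) :
    Types Γ e' T := by
  obtain ⟨E, a, b, hab, rfl, rfl⟩ := hr
  induction E generalizing T with
  | hole => exact hab.types h
  | app E f ih =>
    obtain ⟨n, c, d, rfl, h1, h2⟩ := h.app_inv
    exact .arrowE (ih h1) h2
  | fst E ih | snd E ih | succ E ih =>
    obtain ⟨n, c, d, rfl, h1, h2⟩ := h.app_inv
    exact .arrowE h1 (ih h2)

lemma RedStar.types {e e' : Expr} {T : PseudoType} (hr : RedStar e e') (h : Types Γ e T) :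
    Types Γ e' T := by
  induction hr with
  | refl => exact h
  | tail _ hst ih => exact hst.types ih

end SubjectReduction

section GuardedSemantics

/-- The `b`-th child of `t`: the only child of `•u`, and `t` itself (a junk value) for a leaf. -/
def tyChild (b : Bool) (t : PseudoType) : PseudoType :=
  match t.dest with
  | ⟨.bullet, ch⟩ => ch ()
  | ⟨.arrow, ch⟩ => ch b
  | ⟨.prod, ch⟩ => ch b
  | ⟨_, _⟩ => t

abbrev GType : Type := {t : PseudoType // Guarded t}

def NonBulletChild (s t : GType) : Prop := Child t.1 s.1 ∧ ¬ headIsBullet t.1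

-- A descending chain would be an infinite path without `•`s.
lemma NonBulletChild.wellFounded : WellFounded NonBulletChild := by
  refine ⟨fun a => by_contra fun hna => ?_⟩
  have step : ∀ x : GType, ¬ Acc NonBulletChild x →
      ∃ y, NonBulletChild y x ∧ ¬ Acc NonBulletChild y :=
    fun x hx => by_contra fun hy => hx ⟨x, fun y hyx => by_contra fun hny => hy ⟨y, hyx, hny⟩⟩
  choose next hnext hnacc using step
  let f : ℕ → {x : GType // ¬ Acc NonBulletChild x} :=
    fun n => Nat.rec ⟨a, hna⟩ (fun _ p => ⟨next p.1 p.2, hnacc p.1 p.2⟩) n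
  have hf : ∀ n, NonBulletChild (f (n + 1)).1 (f n).1 := fun n => hnext _ _
  obtain ⟨n, -, hb⟩ := a.2 (fun n => (f n).1.1) rfl (fun n => (hf n).1) 0
  exact (hf n).2 hb

instance : WellFoundedRelation GType := ⟨NonBulletChild, NonBulletChild.wellFounded⟩

lemma guarded_tyChild {t : PseudoType} (ht : Guarded t) (b : Bool) : Guarded (tyChild b t) := by
  rcases PseudoType.cases t with ⟨u, rfl⟩ | ⟨u, v, rfl⟩ | ⟨u, v, rfl⟩ | rfl | ⟨n, rfl⟩
  · exact guarded_tbullet_iff.mp ht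
  · cases b
    exacts [(guarded_tarrow_iff.mp ht).1, (guarded_tarrow_iff.mp ht).2]
  · cases b
    exacts [(guarded_tprod_iff.mp ht).1, (guarded_tprod_iff.mp ht).2]
  · exact ht
  · exact ht

lemma nonBulletChild_tyChild {t : GType} (hc : t.1.dest.1 = .arrow ∨ t.1.dest.1 = .prod)
    (b : Bool) : NonBulletChild ⟨tyChild b t.1, guarded_tyChild t.2 b⟩ t := by
  obtain ⟨t, ht⟩ := t
  refine ⟨?_, fun hb => by rcases hc with h | h <;> exact nomatch h.symm.trans hb⟩
  rcases PseudoType.cases t with ⟨u, rfl⟩ | ⟨u, v, rfl⟩ | ⟨u, v, rfl⟩ | rfl | ⟨n, rfl⟩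
  · exact hc.elim nofun nofun
  · cases b <;> simp [tyChild, child_tarrow]
  · cases b <;> simp [tyChild, child_tprod]
  · exact hc.elim nofun nofun
  · exact hc.elim nofun nofun

lemma gsem_decreasing {j k : ℕ} {t : GType} (hj : j ≤ k + 1)
    (hc : t.1.dest.1 = .arrow ∨ t.1.dest.1 = .prod) (b : Bool) :
    Prod.Lex (· < ·) NonBulletChild (j, ⟨tyChild b t.1, guarded_tyChild t.2 b⟩) (k + 1, t) := by
  rcases hj.lt_or_eq with hj | rfl
  exacts [.left _ _ hj, .right _ (nonBulletChild_tyChild hc b)]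

/-- The step-indexed semantics `⟦t⟧ₖ` of a guarded type, by recursion on `k` and, within a level,
along non-`•` children. Arrows quantify over all levels `j ≤ k`, which makes `⟦t⟧ₖ` antitone
in `k` despite the contravariance. -/
noncomputable def gsem : ℕ → GType → Set Expr
  | 0, _ => Set.univ
  | k + 1, ⟨t, ht⟩ =>
    match _hd : t.dest.1 with
    | .bullet => gsem k ⟨tyChild false t, guarded_tyChild ht false⟩
    | .arrow => {e | HasWhnf e ∧ ∀ j ≤ k + 1,
        ∀ f ∈ gsem j ⟨tyChild false t, guarded_tyChild ht false⟩,
        .app e f ∈ gsem j ⟨tyChild true t, guarded_tyChild ht true⟩}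
    | .prod => {e | HasWhnf e ∧ ∀ j ≤ k + 1,
        .app (.const .cfst) e ∈ gsem j ⟨tyChild false t, guarded_tyChild ht false⟩ ∧
        .app (.const .csnd) e ∈ gsem j ⟨tyChild true t, guarded_tyChild ht true⟩}
    | _ => {e | HasWhnf e}
termination_by k t => (k, t)
decreasing_by
  · exact .left _ _ (Nat.lt_succ_self k)
  all_goals first
    | exact gsem_decreasing (t := ⟨t, ht⟩) ‹j ≤ k + 1› (.inl _hd) _
    | exact gsem_decreasing (t := ⟨t, ht⟩) ‹j ≤ k + 1› (.inr _hd) _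

lemma gsem_zero (t : GType) : gsem 0 t = Set.univ := by rw [gsem]

lemma gsem_tbullet {k : ℕ} {u : PseudoType} (h : Guarded (tbullet u)) :
    gsem (k + 1) ⟨tbullet u, h⟩ = gsem k ⟨u, guarded_tbullet_iff.mp h⟩ := by
  rw [gsem]; rfl

lemma mem_gsem_tarrow {k : ℕ} {a b : PseudoType} {e : Expr} (h : Guarded (tarrow a b)) :
    e ∈ gsem (k + 1) ⟨tarrow a b, h⟩ ↔ HasWhnf e ∧ ∀ j ≤ k + 1,
      ∀ f ∈ gsem j ⟨a, (guarded_tarrow_iff.mp h).1⟩,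
        .app e f ∈ gsem j ⟨b, (guarded_tarrow_iff.mp h).2⟩ := by
  rw [gsem]; rfl

lemma mem_gsem_tprod {k : ℕ} {a b : PseudoType} {e : Expr} (h : Guarded (tprod a b)) :
    e ∈ gsem (k + 1) ⟨tprod a b, h⟩ ↔ HasWhnf e ∧ ∀ j ≤ k + 1,
      .app (.const .cfst) e ∈ gsem j ⟨a, (guarded_tprod_iff.mp h).1⟩ ∧
      .app (.const .csnd) e ∈ gsem j ⟨b, (guarded_tprod_iff.mp h).2⟩ := by
  rw [gsem]; rfl

lemma gsem_tnat {k : ℕ} (h : Guarded tnat) : gsem (k + 1) ⟨tnat, h⟩ = {e | HasWhnf e} := by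
  rw [gsem]; rfl

lemma gsem_tvar {k n : ℕ} (h : Guarded (tvar n)) :
    gsem (k + 1) ⟨tvar n, h⟩ = {e | HasWhnf e} := by
  rw [gsem]; rfl

end GuardedSemantics

section Semantics

/-- Arguments of type `a` at level `j`: unconstrained when `a` is not guarded. -/
def argSem (j : ℕ) (a : PseudoType) : Set Expr := {f | ∀ h : Guarded a, f ∈ gsem j ⟨a, h⟩}

/-- One unfolding of the semantics at level `k + 1`, from the levels `j ≤ k` (`prev j`) and a
candidate `S` for level `k + 1` itself. -/
def semStep (prev : ℕ → PseudoType → Set Expr) (k : ℕ) (S : PseudoType → Set Expr)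
    (t : PseudoType) : Set Expr :=
  match t.dest.1 with
  | .bullet => prev k (tyChild false t)
  | .arrow => {e | HasWhnf e ∧ ∀ j ≤ k + 1, ∀ f ∈ argSem j (tyChild false t),
      .app e f ∈ (if j ≤ k then prev j else S) (tyChild true t)}
  | .prod => {e | HasWhnf e ∧ ∀ j ≤ k + 1,
      .app (.const .cfst) e ∈ (if j ≤ k then prev j else S) (tyChild false t) ∧
      .app (.const .csnd) e ∈ (if j ≤ k then prev j else S) (tyChild true t)}
  | _ => {e | HasWhnf e}

lemma semStep_mono (prev : ℕ → PseudoType → Set Expr) (k : ℕ) : Monotone (semStep prev k) := by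
  intro S₁ S₂ hS t
  have hlev : ∀ j t', (if j ≤ k then prev j else S₁) t' ⊆ (if j ≤ k then prev j else S₂) t' :=
    fun j t' => by split_ifs; exacts [subset_rfl, hS t']
  unfold semStep
  split
  · exact subset_rfl
  · exact fun e ⟨hw, h⟩ => ⟨hw, fun j hj f hf => hlev _ _ (h j hj f hf)⟩
  · exact fun e ⟨hw, h⟩ => ⟨hw, fun j hj => ⟨hlev _ _ (h j hj).1, hlev _ _ (h j hj).2⟩⟩
  · exact subset_rfl

/-- The semantics of an arbitrary pseudo-type. Unguarded pseudo-types occur in derivations (as the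
domain of an abstraction whose variable is unused, say) and admit no well-founded recursion, so
level `k + 1` is the least fixed point of `semStep`, which is monotone because argument
positions are read through `argSem`. On guarded types it is `gsem` (`sem_eq_gsem`). -/
noncomputable def sem : ℕ → PseudoType → Set Expr
  | 0 => fun _ => Set.univ
  | k + 1 => OrderHom.lfp ⟨semStep (fun j => sem (min j k)) k, semStep_mono _ k⟩
termination_by k => k
decreasing_by exact Nat.lt_succ_of_le (Nat.min_le_right _ _)

lemma sem_zero (t : PseudoType) : sem 0 t = Set.univ := by rw [sem]

lemma sem_succ_eq (k : ℕ) : sem (k + 1) = semStep (fun j => sem (min j k)) k (sem (k + 1)) := by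
  have h : sem (k + 1) = OrderHom.lfp ⟨semStep (fun j => sem (min j k)) k, semStep_mono _ k⟩ := by
    rw [sem]
  rw [h]
  exact (OrderHom.map_lfp _).symm

lemma sem_level {j k : ℕ} (hj : j ≤ k + 1) :
    (if j ≤ k then sem (min j k) else sem (k + 1)) = sem j := by
  split_ifs with h
  · rw [min_eq_left h]
  · rw [show j = k + 1 by omega]

lemma sem_tbullet (k : ℕ) (u : PseudoType) : sem (k + 1) (tbullet u) = sem k u := by
  rw [sem_succ_eq]
  exact congrArg (sem · u) (min_self k)

lemma mem_sem_tarrow_argSem {k : ℕ} {a b : PseudoType} {e : Expr} :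
    e ∈ sem (k + 1) (tarrow a b) ↔
      HasWhnf e ∧ ∀ j ≤ k + 1, ∀ f ∈ argSem j a, .app e f ∈ sem j b := by
  conv_lhs => rw [sem_succ_eq]
  exact and_congr_right fun _ => forall₂_congr fun j hj => by rw [← sem_level hj]; rfl

lemma mem_sem_tprod {k : ℕ} {a b : PseudoType} {e : Expr} :
    e ∈ sem (k + 1) (tprod a b) ↔ HasWhnf e ∧ ∀ j ≤ k + 1,
      .app (.const .cfst) e ∈ sem j a ∧ .app (.const .csnd) e ∈ sem j b := by
  conv_lhs => rw [sem_succ_eq]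
  exact and_congr_right fun _ => forall₂_congr fun j hj => by rw [← sem_level hj]; rfl

lemma sem_tnat (k : ℕ) : sem (k + 1) tnat = {e | HasWhnf e} := by
  rw [sem_succ_eq]; rfl

lemma sem_tvar (k n : ℕ) : sem (k + 1) (tvar n) = {e | HasWhnf e} := by
  rw [sem_succ_eq]; rfl

end Semantics

section Collapse

lemma argSem_of_guarded {j : ℕ} {a : PseudoType} (ha : Guarded a) :
    argSem j a = gsem j ⟨a, ha⟩ :=
  Set.ext fun _ => ⟨fun h => h ha, fun h _ => h⟩

lemma GType.level_induction {P : ℕ → GType → Prop} (zero : ∀ t, P 0 t)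
    (succ : ∀ k t, (∀ j ≤ k, ∀ s, P j s) → (∀ j ≤ k + 1, ∀ s, NonBulletChild s t → P j s) →
      P (k + 1) t)
    (k : ℕ) (t : GType) : P k t := by
  induction k using Nat.strong_induction_on generalizing t with
  | _ k ihk =>
  rcases k with _ | k
  · exact zero t
  induction t using NonBulletChild.wellFounded.induction with
  | _ t iht =>
  refine succ k t (fun j hj s => ihk j (by omega) s) fun j hj s hs => ?_
  rcases hj.lt_or_eq with hj | rfl
  exacts [ihk j hj s, iht s hs]

lemma sem_eq_gsem (k : ℕ) (t : GType) : sem k t.1 = gsem k t := by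
  induction k, t using GType.level_induction with
  | zero t => rw [sem_zero, gsem_zero]
  | succ k t ihk hchild =>
  obtain ⟨t, ht⟩ := t
  rcases PseudoType.cases t with ⟨u, rfl⟩ | ⟨a, b, rfl⟩ | ⟨a, b, rfl⟩ | rfl | ⟨n, rfl⟩
  · rw [sem_tbullet, gsem_tbullet]
    exact ihk k le_rfl ⟨u, _⟩
  · have hb : ∀ j ≤ k + 1, sem j b = gsem j ⟨b, (guarded_tarrow_iff.mp ht).2⟩ := fun j hj =>
      hchild j hj _ (nonBulletChild_tyChild (t := ⟨_, ht⟩) (.inl rfl) true)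
    ext e
    rw [mem_sem_tarrow_argSem, mem_gsem_tarrow]
    refine and_congr_right fun _ => forall₂_congr fun j hj => ?_
    rw [argSem_of_guarded (guarded_tarrow_iff.mp ht).1, hb j hj]
  · have ha : ∀ j ≤ k + 1, sem j a = gsem j ⟨a, (guarded_tprod_iff.mp ht).1⟩ := fun j hj =>
      hchild j hj _ (nonBulletChild_tyChild (t := ⟨_, ht⟩) (.inr rfl) false)
    have hb : ∀ j ≤ k + 1, sem j b = gsem j ⟨b, (guarded_tprod_iff.mp ht).2⟩ := fun j hj =>
      hchild j hj _ (nonBulletChild_tyChild (t := ⟨_, ht⟩) (.inr rfl) true)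
    ext e
    rw [mem_sem_tprod, mem_gsem_tprod]
    refine and_congr_right fun _ => forall₂_congr fun j hj => ?_
    rw [ha j hj, hb j hj]
  · rw [sem_tnat, gsem_tnat]
  · rw [sem_tvar, gsem_tvar]

lemma mem_argSem {j : ℕ} {a : PseudoType} {f : Expr} :
    f ∈ argSem j a ↔ (Guarded a → f ∈ sem j a) :=
  forall_congr' fun ha => by rw [← sem_eq_gsem j ⟨a, ha⟩]

lemma mem_sem_tarrow {k : ℕ} {a b : PseudoType} {e : Expr} :
    e ∈ sem (k + 1) (tarrow a b) ↔
      HasWhnf e ∧ ∀ j ≤ k + 1, ∀ f, (Guarded a → f ∈ sem j a) → .app e f ∈ sem j b := by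
  simp only [mem_sem_tarrow_argSem, mem_argSem]

end Collapse

section SemanticProperties

lemma mem_sem_zero (t : PseudoType) (e : Expr) : e ∈ sem 0 t := by
  rw [sem_zero]; trivial

lemma sem_succ_subset (k : ℕ) (t : PseudoType) : sem (k + 1) t ⊆ sem k t := by
  induction k generalizing t with
  | zero => exact fun e _ => mem_sem_zero t e
  | succ k ih =>
    rcases PseudoType.cases t with ⟨u, rfl⟩ | ⟨a, b, rfl⟩ | ⟨a, b, rfl⟩ | rfl | ⟨n, rfl⟩
    · rw [sem_tbullet, sem_tbullet]; exact ih u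
    · intro e he
      rw [mem_sem_tarrow] at he ⊢
      exact ⟨he.1, fun j hj => he.2 j (by omega)⟩
    · intro e he
      rw [mem_sem_tprod] at he ⊢
      exact ⟨he.1, fun j hj => he.2 j (by omega)⟩
    · rw [sem_tnat, sem_tnat]
    · rw [sem_tvar, sem_tvar]

lemma sem_antitone (t : PseudoType) : Antitone (sem · t) :=
  antitone_nat_of_succ_le fun k => sem_succ_subset k t

lemma sem_expand {k : ℕ} {t : PseudoType} {e e' : Expr} (hr : Red e e') (he : e' ∈ sem k t) :
    e ∈ sem k t := by
  induction k using Nat.strong_induction_on generalizing t e e' with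
  | _ k ihk =>
  rcases k with _ | k
  · exact mem_sem_zero t e
  let F : (PseudoType → Set Expr) →o (PseudoType → Set Expr) :=
    ⟨semStep (fun j => sem (min j k)) k, semStep_mono _ k⟩
  let D : PseudoType → Set Expr :=
    fun t => {e' ∈ sem (k + 1) t | ∀ e, Red e e' → e ∈ sem (k + 1) t}
  have hlev : ∀ j ≤ k + 1, ∀ s x x', Red x x' →
      x' ∈ (if j ≤ k then sem (min j k) else D) s → x ∈ sem j s := by
    intro j hj s x x' hr hx
    split_ifs at hx with h
    · rw [min_eq_left h] at hx
      exact ihk j (by omega) hr hx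
    · obtain rfl : j = k + 1 := by omega
      exact hx.2 x hr
  -- `D` is a pre-fixed point of `F`, hence contains its least fixed point `sem (k + 1)`.
  have hD : F D ≤ D := by
    intro t e' he'
    have hsub : F D t ⊆ sem (k + 1) t := by
      rw [sem_succ_eq]; exact F.monotone (fun _ _ h => h.1) t
    refine ⟨hsub he', fun e hr => ?_⟩
    rw [sem_succ_eq]
    rcases PseudoType.cases t with ⟨u, rfl⟩ | ⟨a, b, rfl⟩ | ⟨a, b, rfl⟩ | rfl | ⟨n, rfl⟩
    · exact ihk (min k k) (by omega) hr he'
    · obtain ⟨hw, happ⟩ := he'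
      refine ⟨hw.of_red hr, fun j hj f hf => ?_⟩
      rw [sem_level hj]
      exact hlev j hj _ _ _ (hr.app_left f) (happ j hj f hf)
    · obtain ⟨hw, hproj⟩ := he'
      refine ⟨hw.of_red hr, fun j hj => ?_⟩
      rw [sem_level hj]
      exact ⟨hlev j hj _ _ _ (hr.plug (.fst .hole)) (hproj j hj).1,
        hlev j hj _ _ _ (hr.plug (.snd .hole)) (hproj j hj).2⟩
    · exact HasWhnf.of_red hr he'
    · exact HasWhnf.of_red hr he'
  have hle : sem (k + 1) ≤ D := by
    have h : sem (k + 1) = OrderHom.lfp F := by rw [sem]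
    rw [h]
    exact OrderHom.lfp_le F hD
  exact (hle t he).2 e hr

lemma sem_tbulletN (k n : ℕ) (u : PseudoType) : sem k (tbulletN n u) = sem (k - n) u := by
  induction n generalizing k with
  | zero => rfl
  | succ n ih =>
    rcases k with _ | k
    · rw [sem_zero, Nat.zero_sub, sem_zero]
    · rw [tbulletN_succ, sem_tbullet, ih, Nat.add_sub_add_right]

lemma Stuck.mem_sem {e : Expr} (hs : Stuck e) (k : ℕ) {t : PseudoType} (ht : Guarded t) :
    e ∈ sem k t := by
  suffices ∀ k (t : GType) e, Stuck e → e ∈ sem k t.1 from this k ⟨t, ht⟩ e hs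
  intro k t
  induction k, t using GType.level_induction with
  | zero t => exact fun e _ => mem_sem_zero t.1 e
  | succ k t ihk hchild =>
  intro e hs
  obtain ⟨t, ht⟩ := t
  rcases PseudoType.cases t with ⟨u, rfl⟩ | ⟨a, b, rfl⟩ | ⟨a, b, rfl⟩ | rfl | ⟨n, rfl⟩
  · rw [sem_tbullet]
    exact ihk k le_rfl ⟨u, guarded_tbullet_iff.mp ht⟩ e hs
  · refine mem_sem_tarrow.mpr ⟨.of_normalForm hs.normalForm, fun j hj f _ => ?_⟩
    exact hchild j hj _ (nonBulletChild_tyChild (t := ⟨_, ht⟩) (.inl rfl) true) _ (hs.app f)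
  · refine mem_sem_tprod.mpr ⟨.of_normalForm hs.normalForm, fun j hj => ⟨?_, ?_⟩⟩
    · exact hchild j hj _ (nonBulletChild_tyChild (t := ⟨_, ht⟩) (.inr rfl) false) _ hs.fst
    · exact hchild j hj _ (nonBulletChild_tyChild (t := ⟨_, ht⟩) (.inr rfl) true) _ hs.snd
  · rw [sem_tnat]; exact .of_normalForm hs.normalForm
  · rw [sem_tvar]; exact .of_normalForm hs.normalForm

lemma hasWhnf_of_mem_sem {k : ℕ} {u : PseudoType} {e : Expr} (hu : ¬ headIsBullet u)
    (he : e ∈ sem (k + 1) u) : HasWhnf e := by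
  rcases PseudoType.cases u with ⟨u, rfl⟩ | ⟨a, b, rfl⟩ | ⟨a, b, rfl⟩ | rfl | ⟨n, rfl⟩
  · exact absurd (headIsBullet_tbullet u) hu
  · exact (mem_sem_tarrow.mp he).1
  · exact (mem_sem_tprod.mp he).1
  · rwa [sem_tnat] at he
  · rwa [sem_tvar] at he

end SemanticProperties

section FundamentalLemma

lemma mem_sem_tarrow_of_app {k : ℕ} {a b : PseudoType} {e : Expr} (hw : HasWhnf e)
    (h : ∀ j < k, ∀ f, (Guarded a → f ∈ sem (j + 1) a) → .app e f ∈ sem (j + 1) b) :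
    e ∈ sem k (tarrow a b) := by
  rcases k with _ | k
  · exact mem_sem_zero _ e
  refine mem_sem_tarrow.mpr ⟨hw, fun j hj f hf => ?_⟩
  rcases j with _ | j
  exacts [mem_sem_zero b _, h j (by omega) f hf]

lemma KappaTy.const_mem_sem {c : Const} {u : PseudoType} (hk : KappaTy c u) (k : ℕ) :
    .const c ∈ sem k u := by
  have hc : HasWhnf (.const c) := .of_normalForm (normalForm_const c)
  cases hk with
  | @pair t s ht hs =>
    refine mem_sem_tarrow_of_app hc fun j _ f hf => ?_
    refine mem_sem_tarrow_of_app (.of_normalForm (normalForm_pair_app f)) fun i hi g hg => ?_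
    refine mem_sem_tprod.mpr ⟨.of_normalForm (normalForm_mkPair f g), fun m hm => ⟨?_, ?_⟩⟩
    · exact sem_expand (.of_headRed (.fst f g)) (sem_antitone t (by omega) (hf ht.2))
    · exact sem_expand (.of_headRed (.snd f g)) (sem_antitone s hm (hg hs.2))
  | fst ht hs =>
    refine mem_sem_tarrow_of_app hc fun j _ f hf => ?_
    exact ((mem_sem_tprod.mp (hf (guarded_tprod_iff.mpr ⟨ht.2, hs.2⟩))).2 (j + 1) le_rfl).1
  | snd ht hs =>
    refine mem_sem_tarrow_of_app hc fun j _ f hf => ?_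
    exact ((mem_sem_tprod.mp (hf (guarded_tprod_iff.mpr ⟨ht.2, hs.2⟩))).2 (j + 1) le_rfl).2
  | zero =>
    rcases k with _ | k
    exacts [mem_sem_zero _ _, (sem_tnat k).symm ▸ hc]
  | succ =>
    refine mem_sem_tarrow_of_app hc fun j _ f hf => ?_
    rw [sem_tnat] at hf ⊢
    exact (hf guarded_tnat).succ_app

theorem Types.substE_mem_sem {Γ : Ctx} {e : Expr} {t : PseudoType} (h : Types Γ e t) {k : ℕ}
    {σ : ℕ → Expr} (hσ : ∀ x u, Γ x = some u → Guarded u → σ x ∈ sem k u) :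
    substE σ e ∈ sem k t := by
  induction h generalizing k σ with
  | ax hx ht => exact hσ _ _ hx ht.2
  | const hk => exact hk.const_mem_sem k
  | bulletI _ ih =>
    rcases k with _ | k
    · exact mem_sem_zero _ _
    · rw [sem_tbullet]
      exact sem_antitone _ k.le_succ (ih hσ)
  | @arrowI Γ e n t s _ ih =>
    rw [sem_tbulletN]
    refine mem_sem_tarrow_of_app (.of_normalForm (normalForm_lam _)) fun j hj f hf => ?_
    refine sem_expand (.of_headRed (.beta _ f)) ?_
    rw [subst0_substE_liftSub]
    have hbody := ih (k := j + 1 + n) (σ := scons f σ) ?_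
    · rwa [sem_tbulletN, Nat.add_sub_cancel] at hbody
    rintro (_ | x) u hx hu
    · cases hx
      rw [sem_tbulletN, Nat.add_sub_cancel]
      exact hf (guarded_tbulletN_iff.mp hu)
    · exact sem_antitone u (by omega) (hσ x u hx hu)
  | @arrowE Γ e₁ e₂ n t s _ _ ih₁ ih₂ =>
    have h₁ := ih₁ hσ
    have h₂ := ih₂ hσ
    rw [sem_tbulletN] at h₁ h₂ ⊢
    rcases hK : k - n with _ | K
    · exact mem_sem_zero _ _
    rw [hK] at h₁ h₂
    exact (mem_sem_tarrow.mp h₁).2 (K + 1) le_rfl _ fun _ => h₂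

theorem Types.hasWhnf {Γ : Ctx} {e : Expr} {T : PseudoType} (hT : BinfFree T)
    (h : Types Γ e T) : HasWhnf e := by
  obtain ⟨n, u, rfl, hu⟩ := hT.exists_tbulletN
  have he := h.substE_mem_sem (k := n + 1) fun x _ _ hg => (Stuck.var x).mem_sem _ hg
  rw [substE_var, sem_tbulletN, Nat.add_sub_cancel_left] at he
  exact hasWhnf_of_mem_sem hu he

end FundamentalLemma

section NormalForms

inductive Value : Expr → Prop
  | lam (d : Expr) : Value (.lam d)
  | const (c : Const) : Value (.const c)
  | pairApp (a : Expr) : Value (.app (.const .pair) a)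
  | pair (a b : Expr) : Value (mkPair a b)
  | succApp (a : Expr) : Value (.app (.const .succ) a)

variable {Γ : Ctx}

lemma Value.eq_mkPair {u : Expr} {n : ℕ} {p q : PseudoType} (hv : Value u)
    (h : Types Γ u (tbulletN n (tprod p q))) : ∃ a b, u = mkPair a b := by
  cases hv with
  | lam d =>
    obtain ⟨m, a, b, he, -⟩ := h.lam_inv
    exact absurd he.symm tbulletN_tarrow_ne_tprod
  | const c =>
    obtain ⟨m, w, hk, he⟩ := h.const_inv
    cases hk
    case zero => exact absurd he tbulletN_tprod_ne_tnat
    all_goals exact absurd he.symm tbulletN_tarrow_ne_tprod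
  | pairApp a =>
    obtain ⟨m, p, q, he, -⟩ := h.pair_app_inv
    exact absurd he.symm tbulletN_tarrow_ne_tprod
  | pair a b => exact ⟨a, b, rfl⟩
  | succApp a =>
    obtain ⟨m, he, -⟩ := h.succ_app_inv
    exact absurd he tbulletN_tprod_ne_tnat

lemma NormalForm.stuck_or_value {u : Expr} {T : PseudoType} (hn : NormalForm u)
    (h : Types Γ u T) : Stuck u ∨ Value u := by
  induction u generalizing T with
  | var x => exact .inl (.var x)
  | const c => exact .inr (.const c)
  | lam d => exact .inr (.lam d)
  | app u v ihu ihv =>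
    obtain ⟨n, a, b, -, hu, -⟩ := h.app_inv
    rcases ihu hn.app_left hu with hs | hval
    · exact .inl (hs.app v)
    cases hval with
    | lam d => exact absurd (.of_headRed (.beta d v)) (hn _)
    | const c =>
      cases c with
      | pair => exact .inr (.pairApp v)
      | cfst =>
        obtain ⟨m, p, q, -, hv⟩ := h.fst_app_inv
        refine (ihv (hn.app_right (.inl rfl)) hv).imp Stuck.fst fun hval => ?_
        obtain ⟨x, y, rfl⟩ := hval.eq_mkPair hv
        exact absurd (.of_headRed (.fst x y)) (hn _)
      | csnd =>
        obtain ⟨m, p, q, -, hv⟩ := h.snd_app_inv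
        refine (ihv (hn.app_right (.inr (.inl rfl))) hv).imp Stuck.snd fun hval => ?_
        obtain ⟨x, y, rfl⟩ := hval.eq_mkPair hv
        exact absurd (.of_headRed (.snd x y)) (hn _)
      | zero => exact absurd h Types.not_zero_app
      | succ => exact .inr (.succApp v)
    | pairApp x => exact .inr (.pair x v)
    | pair x y => exact absurd h Types.not_mkPair_app
    | succApp x => exact absurd h Types.not_succ_app_app

end NormalForms

section BinfFreeArguments

def Ctx.BinfFree (Γ : Ctx) : Prop := ∀ x s, Γ x = some s → LambdaBullet.BinfFree s

variable {Γ : Ctx}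

lemma Stuck.binfFree_of_types (hΓ : Γ.BinfFree) {e : Expr} {T : PseudoType} (hs : Stuck e)
    (h : Types Γ e T) : BinfFree T := by
  induction hs generalizing T with
  | var x =>
    obtain ⟨m, u, hx, -, rfl⟩ := h.var_inv
    exact binfFree_tbulletN_iff.mpr (hΓ x u hx)
  | app f _ ih =>
    obtain ⟨n, a, b, rfl, h₁, -⟩ := h.app_inv
    simpa using (binfFree_tarrow_iff.mp (binfFree_tbulletN_iff.mp (ih h₁))).2
  | fst _ ih =>
    obtain ⟨n, a, b, rfl, h₁⟩ := h.fst_app_inv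
    simpa using (binfFree_tprod_iff.mp (binfFree_tbulletN_iff.mp (ih h₁))).1
  | snd _ ih =>
    obtain ⟨n, a, b, rfl, h₁⟩ := h.snd_app_inv
    simpa using (binfFree_tprod_iff.mp (binfFree_tbulletN_iff.mp (ih h₁))).2

end BinfFreeArguments

section Spines

lemma spineApp_append_singleton (h a : Expr) (l : List Expr) :
    spineApp h (l ++ [a]) = .app (spineApp h l) a := by
  simp [spineApp]

lemma eq_nil_of_spineApp_eq_const {h : Expr} {l : List Expr} {c : Const}
    (he : spineApp h l = .const c) : l = [] := by
  rcases l.eq_nil_or_concat' with rfl | ⟨l, a, rfl⟩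
  · rfl
  · rw [spineApp_append_singleton] at he; cases he

lemma spineApp_const_ne_lam {c : Const} {l : List Expr} {d : Expr} :
    spineApp (.const c) l ≠ .lam d := by
  rcases l.eq_nil_or_concat' with rfl | ⟨l, a, rfl⟩
  · nofun
  · rw [spineApp_append_singleton]; nofun

lemma spineApp_const_inj {c c' : Const} {l l' : List Expr}
    (h : spineApp (.const c) l = spineApp (.const c') l') : c = c' ∧ l = l' := by
  induction l using List.reverseRecOn generalizing l' with
  | nil => exact ⟨Expr.const.inj (h.trans (by rw [eq_nil_of_spineApp_eq_const h.symm]; rfl)),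
      (eq_nil_of_spineApp_eq_const h.symm).symm⟩
  | append_singleton l a ih =>
    rcases l'.eq_nil_or_concat' with rfl | ⟨l', a', rfl⟩
    · exact absurd (eq_nil_of_spineApp_eq_const h) (by simp)
    · rw [spineApp_append_singleton, spineApp_append_singleton] at h
      obtain ⟨h₁, rfl⟩ := Expr.app.inj h
      obtain ⟨rfl, rfl⟩ := ih h₁
      exact ⟨rfl, rfl⟩

variable {Γ : Ctx}

lemma Stuck.args_binfFree (hΓ : Γ.BinfFree) {h : Expr} {l : List Expr} {T : PseudoType}
    (hs : Stuck (spineApp h l)) (hty : Types Γ (spineApp h l) T) :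
    ∀ a ∈ l, ∃ s, BinfFree s ∧ Types Γ a s := by
  induction l using List.reverseRecOn generalizing T with
  | nil => simp
  | append_singleton l a ih =>
    rw [spineApp_append_singleton] at hs hty
    obtain ⟨n, c, d, -, h₁, h₂⟩ := hty.app_inv
    generalize hg : spineApp h l = g at hs h₁
    simp only [List.mem_append, List.mem_singleton, or_imp, forall_and, forall_eq]
    cases hs with
    | app _ hs =>
      subst hg
      have hbf := hs.binfFree_of_types hΓ h₁
      simp only [binfFree_tbulletN_iff, binfFree_tarrow_iff] at hbf
      exact ⟨ih hs h₁, _, binfFree_tbulletN_iff.mpr hbf.1, h₂⟩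
    | fst hs | snd hs =>
      obtain rfl := eq_nil_of_spineApp_eq_const hg
      exact ⟨by simp, _, hs.binfFree_of_types hΓ h₂, h₂⟩

lemma Value.args_binfFree {c : Const} {l : List Expr} {T : PseudoType}
    (hv : Value (spineApp (.const c) l)) (hT : BinfFree T)
    (hty : Types Γ (spineApp (.const c) l) T) : ∀ a ∈ l, ∃ s, BinfFree s ∧ Types Γ a s := by
  generalize hw : spineApp (.const c) l = w at hv hty
  cases hv with
  | lam d => exact absurd hw spineApp_const_ne_lam
  | const c' =>
    obtain ⟨-, rfl⟩ := spineApp_const_inj (l' := []) hw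
    simp
  | pairApp x =>
    obtain ⟨-, rfl⟩ := spineApp_const_inj (l' := [x]) hw
    obtain ⟨n, p, q, rfl, hx⟩ := hty.pair_app_inv
    simp only [binfFree_tbulletN_iff, binfFree_tarrow_iff, binfFree_tprod_iff] at hT
    simpa using ⟨_, binfFree_tbulletN_iff.mpr hT.2.1, hx⟩
  | pair x y =>
    obtain ⟨-, rfl⟩ := spineApp_const_inj (l' := [x, y]) hw
    obtain ⟨n, p, q, rfl, hx, hy⟩ := hty.mkPair_inv
    simp only [binfFree_tbulletN_iff, binfFree_tprod_iff] at hT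
    simpa using ⟨⟨_, binfFree_tbulletN_iff.mpr hT.1, hx⟩, ⟨_, binfFree_tbulletN_iff.mpr hT.2, hy⟩⟩
  | succApp x =>
    obtain ⟨-, rfl⟩ := spineApp_const_inj (l' := [x]) hw
    obtain ⟨n, rfl, hx⟩ := hty.succ_app_inv
    simpa using ⟨_, binfFree_tbulletN_iff.mpr binfFree_tnat, hx⟩

end Spines

def BinfFreeTypable (e : Expr) : Prop := ∃ Γ T, Ctx.BinfFree Γ ∧ BinfFree T ∧ Types Γ e T

lemma BinfFreeTypable.llSub {e f : Expr} (he : BinfFreeTypable e) (hsub : LLSub e f) :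
    BinfFreeTypable f := by
  obtain ⟨Γ, T, hΓ, hT, hty⟩ := he
  cases hsub with
  | lam hred =>
    obtain ⟨n, a, b, rfl, hbody⟩ := (hred.types hty).lam_inv
    simp only [binfFree_tbulletN_iff, binfFree_tarrow_iff] at hT
    refine ⟨_, _, ?_, binfFree_tbulletN_iff.mpr hT.2, hbody⟩
    rintro (_ | x) s hx
    · cases hx
      exact binfFree_tbulletN_iff.mpr hT.1
    · exact hΓ x s hx
  | var hred hmem =>
    obtain ⟨s, hs, hts⟩ :=
      ((Stuck.var _).spine _).args_binfFree hΓ (hred.types hty) _ hmem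
    exact ⟨Γ, s, hΓ, hs, hts⟩
  | const hred hnf hmem =>
    have hty' := hred.types hty
    obtain ⟨s, hs, hts⟩ := (hnf.stuck_or_value hty').elim
      (fun hst => hst.args_binfFree hΓ hty') (fun hv => hv.args_binfFree hT hty') _ hmem
    exact ⟨Γ, s, hΓ, hs, hts⟩

/-- Productivity I: if `t` and all the types in `Γ` are
`•^∞`-free and `Γ ⊢ e : t` in λ•→, then the Lévy-Longo tree of `e` has
no `⊥`'s. -/
theorem productivity_levy_longo (Γ : Ctx) (e : Expr) (t : PseudoType)
    (ht : BinfFree t) (hΓ : ∀ x s, Γ x = some s → BinfFree s)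
    (h : Types Γ e t) : LLTBotFree e := by
  intro f hreach
  obtain ⟨Γ', T', -, hT', hty⟩ : BinfFreeTypable f := by
    induction hreach with
    | refl => exact ⟨Γ, t, hΓ, ht, h⟩
    | tail _ hsub ih => exact ih.llSub hsub
  exact hty.hasWhnf hT'

end LambdaBullet
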